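/- Let X be a locally Lindelöf, c-well-filtered P-space. Then the map φ'(U) = {K ∈ LQ(X) : K ⊆ U} is an order isomorphism from the lattice O(X) of open sets of X (ordered by ⊆) onto the set of all σ-Scott open countable filters of the poset (LQ(X), ⊇), ordered by ⊆. -/

import Mathlib

universe u

/-- A set is saturated if it equals the intersection of its open neighbourhoods. -/
def IsSaturatedSet {X : Type u} [TopologicalSpace X] (A : Set X) : Prop :=
  A = ⋂₀ {U : Set X | IsOpen U ∧ A ⊆ U}

/-- A family of sets is countably filtered (under `⊆`) if every countable subfamily
has a lower bound in the family. -/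
def CntFilteredFam {X : Type u} (S : Set (Set X)) : Prop :=
  ∀ T ⊆ S, T.Countable → ∃ L ∈ S, ∀ t ∈ T, L ⊆ t

/-- A family of sets is countably directed (under `⊆`) if every countable subfamily
has an upper bound in the family. -/
def CntDirectedFam {X : Type u} (S : Set (Set X)) : Prop :=
  ∀ T ⊆ S, T.Countable → ∃ U ∈ S, ∀ t ∈ T, t ⊆ U

/-- A space is c-well-filtered if for every countably filtered family of saturated
Lindelöf subsets whose intersection is contained in an open `U`, some member is contained in `U`. -/
def CWellFiltered (X : Type u) [TopologicalSpace X] : Prop :=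
  ∀ S : Set (Set X), (∀ K ∈ S, IsSaturatedSet K ∧ IsLindelof K) →
    CntFilteredFam S → ∀ U : Set X, IsOpen U → ⋂₀ S ⊆ U → ∃ K ∈ S, K ⊆ U

/-- A subset `D` is countably directed w.r.t. `le` if every countable subset of `D`
has an upper bound in `D`. -/
def CntDirected {α : Type u} (le : α → α → Prop) (D : Set α) : Prop :=
  ∀ E ⊆ D, E.Countable → ∃ d ∈ D, ∀ e ∈ E, le e d

/-- `a` is a least upper bound of `D` w.r.t. `le`. -/
def RIsLUB {α : Type u} (le : α → α → Prop) (D : Set α) (a : α) : Prop :=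
  (∀ d ∈ D, le d a) ∧ ∀ b, (∀ d ∈ D, le d b) → le a b

/-- Countably directed complete: every countably directed subset has a least upper bound. -/
def CDComplete {α : Type u} (le : α → α → Prop) : Prop :=
  ∀ D : Set α, CntDirected le D → ∃ a, RIsLUB le D a

/-- `x` is countably way-below `y`. -/
def CWayBelow {α : Type u} (le : α → α → Prop) (x y : α) : Prop :=
  ∀ D : Set α, CntDirected le D → ∀ a, RIsLUB le D a → le y a → ∃ d ∈ D, le x d

/-- `U` is σ-Scott open: an upper set meeting every countably directed set whose sup lies in `U`. -/
def SigmaScottOpenRel {α : Type u} (le : α → α → Prop) (U : Set α) : Prop :=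
  (∀ x ∈ U, ∀ y, le x y → y ∈ U) ∧
  ∀ D : Set α, CntDirected le D → ∀ a, RIsLUB le D a → a ∈ U → ∃ d ∈ D, d ∈ U

/-- `F` is countably filtered w.r.t. `le`: every countable subset has a lower bound in `F`. -/
def CntFilteredRel {α : Type u} (le : α → α → Prop) (F : Set α) : Prop :=
  ∀ E ⊆ F, E.Countable → ∃ l ∈ F, ∀ e ∈ E, le l e

/-- Countably approximating: countably directed complete and each `x` is the sup of
the countably directed set of elements countably way-below `x`. -/
def CntApprox {α : Type u} (le : α → α → Prop) : Prop :=
  CDComplete le ∧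
    ∀ x, CntDirected le {y | CWayBelow le y x} ∧ RIsLUB le {y | CWayBelow le y x} x

/-- `B` is a σ-basis: for each `x`, `B ∩ ⇓꜀x` is countably directed with sup `x`. -/
def IsSigmaBasis {α : Type u} (le : α → α → Prop) (B : Set α) : Prop :=
  ∀ x, CntDirected le (B ∩ {y | CWayBelow le y x}) ∧
    RIsLUB le (B ∩ {y | CWayBelow le y x}) x

/-- A P-space: every countable intersection of open sets is open. -/
def PSpace (X : Type u) [TopologicalSpace X] : Prop :=
  ∀ 𝒰 : Set (Set X), 𝒰.Countable → (∀ U ∈ 𝒰, IsOpen U) → IsOpen (⋂₀ 𝒰)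

/-- Locally Lindelöf: every open neighbourhood contains a saturated Lindelöf
neighbourhood. -/
def LocallyLindelofSp (X : Type u) [TopologicalSpace X] : Prop :=
  ∀ U : Set X, IsOpen U → ∀ x ∈ U, ∃ K : Set X,
    IsSaturatedSet K ∧ IsLindelof K ∧ x ∈ interior K ∧ K ⊆ U

/-- The saturated Lindelöf subsets of `X`. -/
def LQ (X : Type u) [TopologicalSpace X] : Type u :=
  {K : Set X // IsSaturatedSet K ∧ IsLindelof K}

/-- The order of `(LQ(X), ⊇)`: reverse inclusion. -/
def lqLe {X : Type u} [TopologicalSpace X] (A B : LQ X) : Prop := B.1 ⊆ A.1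

/-- `φ'(U) = {K ∈ LQ(X) : K ⊆ U}`. -/
def phi' {X : Type u} [TopologicalSpace X] (U : Set X) : Set (LQ X) := {K | K.1 ⊆ U}

/-- A σ-Scott open countable filter of `(LQ(X), ⊇)`. -/
def OCFiltSigma {X : Type u} [TopologicalSpace X] (F : Set (LQ X)) : Prop :=
  SigmaScottOpenRel (lqLe (X := X)) F ∧ CntFilteredRel (lqLe (X := X)) F

/-!
Suprema of countably directed families in `(LQ(X), ⊇)` are intersections, since
c-well-filteredness makes such intersections Lindelöf; c-well-filteredness then says precisely
that `φ'(U)` is σ-Scott open. Conversely, a σ-Scott open countable filter `F` is `φ'(U)` for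
`U = ⋃_{L ∈ F} int L`. If `K ⊆ U`, countably many `int L` with `L ∈ F` cover `K`, and a common
lower bound of these `L` in `F` contains `K`. If `K ∈ F`, then `K` is the supremum of its
saturated Lindelöf neighbourhoods; in a locally Lindelöf P-space these form a countably directed
family, since a countable intersection of their interiors is an open set around `K`. Hence one
of them lies in `F`, and `K ⊆ U`.
-/

open Set

section

variable {X : Type u} [TopologicalSpace X]

theorem isSaturatedSet_iff_nhdsKer_eq {A : Set X} : IsSaturatedSet A ↔ nhdsKer A = A := by
  rw [IsSaturatedSet, nhdsKer_def, eq_comm]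

theorem isSaturatedSet_nhdsKer (s : Set X) : IsSaturatedSet (nhdsKer s) :=
  isSaturatedSet_iff_nhdsKer_eq.2 (nhdsKer_nhdsKer s)

theorem isSaturatedSet_sInter {S : Set (Set X)} (hS : ∀ s ∈ S, IsSaturatedSet s) :
    IsSaturatedSet (⋂₀ S) := by
  refine isSaturatedSet_iff_nhdsKer_eq.2 (Subset.antisymm ?_ subset_nhdsKer)
  refine nhdsKer_sInter_subset.trans (subset_sInter fun s hs ↦ ?_)
  rw [← isSaturatedSet_iff_nhdsKer_eq.1 (hS s hs)]
  exact biInter_subset_of_mem hs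

theorem IsLindelof.nhdsKer {s : Set X} (hs : IsLindelof s) : IsLindelof (nhdsKer s) :=
  isLindelof_of_countable_subcover fun U hUo hsU ↦ by
    obtain ⟨t, htc, hst⟩ := hs.elim_countable_subcover U hUo (subset_nhdsKer.trans hsU)
    exact ⟨t, htc, nhdsKer_minimal hst (isOpen_biUnion fun i _ ↦ hUo i)⟩

theorem PSpace.isOpen_biInter (hP : PSpace X) {ι : Type*} {s : Set ι} {U : ι → Set X}
    (hs : s.Countable) (hU : ∀ i ∈ s, IsOpen (U i)) : IsOpen (⋂ i ∈ s, U i) := by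
  rw [← sInter_image]
  exact hP _ (hs.image U) (forall_mem_image.2 hU)

theorem LocallyLindelofSp.exists_isLindelof_between (hLL : LocallyLindelofSp X) {K V : Set X}
    (hK : IsLindelof K) (hV : IsOpen V) (hKV : K ⊆ V) :
    ∃ L, IsLindelof L ∧ K ⊆ interior L ∧ L ⊆ V := by
  refine hK.induction_on (p := fun s ↦ ∃ L, IsLindelof L ∧ s ⊆ interior L ∧ L ⊆ V)
    (fun s t hst ⟨L, hL, htL, hLV⟩ ↦ ⟨L, hL, hst.trans htL, hLV⟩) (fun S hSc hS ↦ ?_)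
    (fun x hx ↦ ?_)
  · choose! L hL hsL hLV using hS
    refine ⟨⋃ s ∈ S, L s, hSc.isLindelof_biUnion hL, ?_, iUnion₂_subset hLV⟩
    refine sUnion_subset fun s hs ↦ (hsL s hs).trans (interior_mono ?_)
    exact subset_biUnion_of_mem (u := L) hs
  · obtain ⟨L, -, hL, hxL, hLV⟩ := hLL V hV x (hKV hx)
    exact ⟨interior L, mem_nhdsWithin_of_mem_nhds (isOpen_interior.mem_nhds hxL), L, hL,
      Subset.rfl, hLV⟩

namespace LQ

def saturation (s : Set X) (hs : IsLindelof s) : LQ X :=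
  ⟨nhdsKer s, isSaturatedSet_nhdsKer s, hs.nhdsKer⟩

def nhdsSet (K : Set X) : Set (LQ X) := {L | K ⊆ interior L.1}

theorem image_val_subset (D : Set (LQ X)) :
    Subtype.val '' D ⊆ {K | IsSaturatedSet K ∧ IsLindelof K} :=
  Subtype.coe_image_subset _ D

end LQ

theorem LocallyLindelofSp.exists_lq_between (hLL : LocallyLindelofSp X) {K V : Set X}
    (hK : IsLindelof K) (hV : IsOpen V) (hKV : K ⊆ V) :
    ∃ L ∈ LQ.nhdsSet K, L.1 ⊆ V := by
  obtain ⟨L, hL, hKL, hLV⟩ := hLL.exists_isLindelof_between hK hV hKV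
  exact ⟨LQ.saturation L hL, hKL.trans (interior_mono subset_nhdsKer), nhdsKer_minimal hLV hV⟩

theorem CntDirected.cntFilteredFam_image_val {D : Set (LQ X)} (hD : CntDirected lqLe D) :
    CntFilteredFam (Subtype.val '' D) := by
  intro T hTD hT
  obtain ⟨d, hdD, hd⟩ := hD (D ∩ Subtype.val ⁻¹' T) inter_subset_left
    ((hT.preimage Subtype.val_injective).mono inter_subset_right)
  refine ⟨d.1, mem_image_of_mem _ hdD, fun t ht ↦ ?_⟩
  obtain ⟨e, heD, rfl⟩ := hTD ht
  exact hd e ⟨heD, ht⟩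

theorem CWellFiltered.isLindelof_sInter (hW : CWellFiltered X) {S : Set (Set X)}
    (hS : ∀ K ∈ S, IsSaturatedSet K ∧ IsLindelof K) (hSf : CntFilteredFam S) :
    IsLindelof (⋂₀ S) :=
  isLindelof_of_countable_subcover fun U hUo hSU ↦ by
    obtain ⟨K, hKS, hKU⟩ := hW S hS hSf _ (isOpen_iUnion hUo) hSU
    obtain ⟨t, ht, hKt⟩ := (hS K hKS).2.elim_countable_subcover U hUo hKU
    exact ⟨t, ht, (sInter_subset_of_mem hKS).trans hKt⟩

theorem CWellFiltered.val_eq_sInter_of_rIsLUB (hW : CWellFiltered X) {D : Set (LQ X)}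
    (hD : CntDirected lqLe D) {a : LQ X} (ha : RIsLUB lqLe D a) :
    a.1 = ⋂₀ (Subtype.val '' D) := by
  refine (subset_sInter (forall_mem_image.2 ha.1)).antisymm (ha.2 ⟨_, ?_, ?_⟩ ?_)
  · exact isSaturatedSet_sInter fun K hK ↦ (LQ.image_val_subset D hK).1
  · exact hW.isLindelof_sInter (LQ.image_val_subset D) hD.cntFilteredFam_image_val
  · exact fun d hd ↦ sInter_subset_of_mem (mem_image_of_mem _ hd)

theorem cntFilteredRel_phi' {U : Set X} (hU : IsOpen U) : CntFilteredRel lqLe (phi' U) := by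
  intro E hE hEc
  refine ⟨LQ.saturation (⋃ e ∈ E, e.1) (hEc.isLindelof_biUnion fun e _ ↦ e.2.2), ?_,
    fun e he ↦ (subset_biUnion_of_mem he).trans subset_nhdsKer⟩
  exact nhdsKer_minimal (iUnion₂_subset hE) hU

theorem CWellFiltered.sigmaScottOpenRel_phi' (hW : CWellFiltered X) {U : Set X}
    (hU : IsOpen U) : SigmaScottOpenRel lqLe (phi' U) := by
  refine ⟨fun K hK L hKL ↦ hKL.trans hK, fun D hD a ha haU ↦ ?_⟩
  obtain ⟨_, ⟨d, hdD, rfl⟩, hdU⟩ := hW _ (LQ.image_val_subset D)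
    hD.cntFilteredFam_image_val U hU (hW.val_eq_sInter_of_rIsLUB hD ha ▸ haU)
  exact ⟨d, hdD, hdU⟩

theorem LocallyLindelofSp.cntDirected_nhdsSet (hLL : LocallyLindelofSp X) (hP : PSpace X)
    {K : Set X} (hK : IsLindelof K) : CntDirected lqLe (LQ.nhdsSet K) := by
  intro E hE hEc
  obtain ⟨L, hKL, hLE⟩ := hLL.exists_lq_between hK
    (hP.isOpen_biInter hEc fun _ _ ↦ isOpen_interior) (subset_iInter₂ hE)
  exact ⟨L, hKL, fun e he ↦ hLE.trans ((biInter_subset_of_mem he).trans interior_subset)⟩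

theorem LocallyLindelofSp.rIsLUB_nhdsSet (hLL : LocallyLindelofSp X) (K : LQ X) :
    RIsLUB lqLe (LQ.nhdsSet K.1) K := by
  refine ⟨fun L hL ↦ hL.trans interior_subset, fun b hb ↦ ?_⟩
  rw [lqLe, ← isSaturatedSet_iff_nhdsKer_eq.1 K.2.1, subset_nhdsKer_iff]
  intro V hV hKV
  obtain ⟨L, hKL, hLV⟩ := hLL.exists_lq_between K.2.2 hV hKV
  exact (hb L hKL).trans hLV

theorem phi'_iUnion_interior_subset {F : Set (LQ X)}
    (hFup : ∀ K ∈ F, ∀ L, lqLe K L → L ∈ F) (hF : CntFilteredRel lqLe F) :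
    phi' (⋃ L ∈ F, interior L.1) ⊆ F := by
  intro K hK
  obtain ⟨E, hEF, hEc, hKE⟩ :=
    K.2.2.elim_countable_subcover_image (fun _ _ ↦ isOpen_interior) hK
  obtain ⟨M, hMF, hM⟩ := hF E hEF hEc
  exact hFup M hMF K (hKE.trans (iUnion₂_subset fun e he ↦ interior_subset.trans (hM e he)))

theorem LocallyLindelofSp.subset_phi'_iUnion_interior (hLL : LocallyLindelofSp X)
    (hP : PSpace X) {F : Set (LQ X)} (hF : SigmaScottOpenRel lqLe F) :
    F ⊆ phi' (⋃ L ∈ F, interior L.1) := by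
  intro K hK
  obtain ⟨L, hKL, hLF⟩ :=
    hF.2 _ (hLL.cntDirected_nhdsSet hP K.2.2) K (hLL.rIsLUB_nhdsSet K) hK
  exact hKL.trans (subset_biUnion_of_mem (u := fun L : LQ X ↦ interior L.1) hLF)

theorem LocallyLindelofSp.phi'_subset_phi'_iff (hLL : LocallyLindelofSp X) {U V : Set X}
    (hU : IsOpen U) : phi' U ⊆ phi' V ↔ U ⊆ V := by
  refine ⟨fun h x hx ↦ ?_, fun h K hK ↦ hK.trans h⟩
  obtain ⟨K, hKs, hKl, hxK, hKU⟩ := hLL U hU x hx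
  exact h (show (⟨K, hKs, hKl⟩ : LQ X) ∈ phi' U from hKU) (interior_subset hxK)

end

/-- Hofmann–Mislove for c-well-filtered spaces: for a locally Lindelöf,
c-well-filtered P-space, `φ'` is an order isomorphism from `O(X)` onto the σ-Scott open
countable filters of `(LQ(X), ⊇)`. -/
theorem stmt19 {X : Type u} [TopologicalSpace X] (hLL : LocallyLindelofSp X)
    (hW : CWellFiltered X) (hP : PSpace X) :
    (∀ U : Set X, IsOpen U → OCFiltSigma (phi' U)) ∧
    (∀ F : Set (LQ X), OCFiltSigma F → ∃ U : Set X, IsOpen U ∧ phi' U = F) ∧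
    (∀ U V : Set X, IsOpen U → IsOpen V → (U ⊆ V ↔ phi' U ⊆ phi' V)) := by
  refine ⟨fun U hU ↦ ⟨hW.sigmaScottOpenRel_phi' hU, cntFilteredRel_phi' hU⟩,
    fun F hF ↦ ⟨⋃ L ∈ F, interior L.1, isOpen_biUnion fun _ _ ↦ isOpen_interior, ?_⟩,
    fun U V hU _ ↦ (hLL.phi'_subset_phi'_iff hU).symm⟩
  exact (phi'_iUnion_interior_subset hF.1.1 hF.2).antisymm
    (hLL.subset_phi'_iUnion_interior hP hF.1)
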